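/- Let μ be a probability measure on ℝ concentrated on (0,∞) such that the identity and x ↦ √x are μ-integrable and ∫ x dμ(x) = 1, and suppose m = ∫ √x dμ(x) satisfies 0 < m < 1. Then the time-advantaged arbitrageur's optimal expected profit is strictly increasing in the time horizon: for every p > 0 and every k ∈ ℕ, opt(p, k+1) > opt(p, k). -/

import Mathlib

open MeasureTheory Real

/-- Maximal relative arbitrage profit for a fee-free constant product AMM
at relative price difference `p`. -/
noncomputable def profit0 (p : ℝ) : ℝ := p / 2 - Real.sqrt p + 1 / 2

/-- Value function of the time-advantaged arbitrageur, by backward induction on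
the number of remaining time steps: either wait one step, or arbitrage immediately
(resetting the price difference to 1 and scaling the pool value by `√p`). -/
noncomputable def opt0 (μ : Measure ℝ) : ℕ → ℝ → ℝ
  | 0, p => profit0 p
  | (k + 1), p =>
      max (∫ x, opt0 μ k (p * x) ∂μ)
        (profit0 p + Real.sqrt p * ∫ x, opt0 μ k x ∂μ)

lemma profit0_nonneg {p : ℝ} (hp : 0 ≤ p) : 0 ≤ profit0 p := by
  have h := Real.sq_sqrt hp
  unfold profit0
  nlinarith [sq_nonneg (Real.sqrt p - 1)]

lemma profit0_le {p : ℝ} : profit0 p ≤ (1 + p) / 2 := by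
  have h2 := Real.sqrt_nonneg p
  unfold profit0; linarith

lemma profit0_measurable : Measurable profit0 := by
  unfold profit0
  fun_prop

lemma opt0_measurable (μ : Measure ℝ) [SFinite μ] (k : ℕ) :
    Measurable (opt0 μ k) := by
  induction k with
  | zero =>
    show Measurable profit0
    exact profit0_measurable
  | succ k ih =>
    have h1 : Measurable fun p : ℝ => ∫ x, opt0 μ k (p * x) ∂μ := by
      have h : StronglyMeasurable fun q : ℝ × ℝ => opt0 μ k (q.1 * q.2) :=
        (ih.comp (measurable_fst.mul measurable_snd)).stronglyMeasurable
      exact h.integral_prod_right'.measurable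
    show Measurable fun p =>
      max (∫ x, opt0 μ k (p * x) ∂μ)
        (profit0 p + Real.sqrt p * ∫ x, opt0 μ k x ∂μ)
    exact h1.max (profit0_measurable.add
      ((Real.continuous_sqrt.measurable.mul measurable_const)))

lemma ae_pos (μ : Measure ℝ) [IsProbabilityMeasure μ]
    (hμ : μ (Set.Ioi (0 : ℝ)) = 1) : ∀ᵐ x ∂μ, 0 < x := by
  have : μ (Set.Ioi (0 : ℝ))ᶜ = 0 := by
    rw [prob_compl_eq_zero_iff measurableSet_Ioi]
    exact hμ
  filter_upwards [measure_eq_zero_iff_ae_notMem.mp this] with x hx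
  simpa [Set.mem_Ioi] using hx

lemma opt0_integrable_aux (μ : Measure ℝ) [IsProbabilityMeasure μ]
    (hμ : μ (Set.Ioi (0 : ℝ)) = 1) (hid : Integrable (fun x : ℝ => x) μ)
    (k : ℕ) (C : ℝ)
    (hb : ∀ q : ℝ, 0 < q → 0 ≤ opt0 μ k q ∧ opt0 μ k q ≤ C * (1 + q))
    (p : ℝ) (hp : 0 < p) :
    Integrable (fun x => opt0 μ k (p * x)) μ := by
  have hmeas : AEStronglyMeasurable (fun x => opt0 μ k (p * x)) μ :=
    ((opt0_measurable μ k).comp (measurable_const.mul measurable_id)).aestronglyMeasurable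
  have hgint : Integrable (fun x : ℝ => C * (1 + p * x)) μ := by
    exact ((integrable_const (1 : ℝ)).add (hid.const_mul p)).const_mul C
  refine hgint.mono' hmeas ?_
  filter_upwards [ae_pos μ hμ] with x hx
  have hpx : 0 < p * x := mul_pos hp hx
  obtain ⟨h0, h1⟩ := hb (p * x) hpx
  rw [Real.norm_eq_abs, abs_of_nonneg h0]
  simpa [mul_add] using h1

lemma opt0_bound (μ : Measure ℝ) [IsProbabilityMeasure μ]
    (hμ : μ (Set.Ioi (0 : ℝ)) = 1) (hid : Integrable (fun x : ℝ => x) μ)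
    (hmean : ∫ x, x ∂μ = 1) :
    ∀ k : ℕ, ∀ p : ℝ, 0 < p →
      0 ≤ opt0 μ k p ∧ opt0 μ k p ≤ ((k : ℝ) + 1) / 2 * (1 + p) := by
  intro k
  induction k with
  | zero =>
    intro p hp
    refine ⟨profit0_nonneg hp.le, ?_⟩
    show profit0 p ≤ _
    have := profit0_le (p := p)
    push_cast
    linarith
  | succ k ih =>
    intro p hp
    set C : ℝ := ((k : ℝ) + 1) / 2 with hC
    have hC0 : 0 ≤ C := by positivity
    have hInt : ∀ q : ℝ, 0 < q → Integrable (fun x => opt0 μ k (q * x)) μ :=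
      opt0_integrable_aux μ hμ hid k C ih
    have hInt1 : Integrable (fun x => opt0 μ k x) μ := by
      simpa using hInt 1 one_pos
    have hae := ae_pos μ hμ
    -- value of the integral of the bound
    have hIb : ∀ q : ℝ, (∫ x, C * (1 + q * x) ∂μ) = C * (1 + q) := by
      intro q
      have h1 : Integrable (fun x : ℝ => q * x) μ := hid.const_mul q
      rw [integral_const_mul, integral_add (integrable_const _) h1,
        integral_const_mul, hmean, integral_const]
      simp
    have hA : (∫ x, opt0 μ k (p * x) ∂μ) ≤ C * (1 + p) := by
      rw [← hIb p]
      refine integral_mono_ae (hInt p hp)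
        (((integrable_const (1 : ℝ)).add (hid.const_mul p)).const_mul C) ?_
      filter_upwards [hae] with x hx
      exact (ih (p * x) (mul_pos hp hx)).2
    -- bound on ∫ opt0 k
    have hI1le : (∫ x, opt0 μ k x ∂μ) ≤ C * 2 := by
      have : (∫ x, opt0 μ k x ∂μ) ≤ C * (1 + 1) := by
        rw [← hIb 1]
        refine integral_mono_ae hInt1
          (((integrable_const (1 : ℝ)).add (hid.const_mul 1)).const_mul C) ?_
        filter_upwards [hae] with x hx
        simpa using (ih x hx).2
      linarith
    have hI1ge : 0 ≤ ∫ x, opt0 μ k x ∂μ := by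
      refine integral_nonneg_of_ae ?_
      filter_upwards [hae] with x hx
      exact (ih x hx).1
    have hsq0 : 0 ≤ Real.sqrt p := Real.sqrt_nonneg p
    have hsq : 2 * Real.sqrt p ≤ 1 + p := by
      have h := Real.sq_sqrt hp.le
      nlinarith [sq_nonneg (Real.sqrt p - 1)]
    constructor
    · show 0 ≤ max (∫ x, opt0 μ k (p * x) ∂μ)
        (profit0 p + Real.sqrt p * ∫ x, opt0 μ k x ∂μ)
      refine le_max_of_le_right ?_
      have := profit0_nonneg hp.le
      positivity
    · show max (∫ x, opt0 μ k (p * x) ∂μ)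
        (profit0 p + Real.sqrt p * ∫ x, opt0 μ k x ∂μ) ≤
        (((k : ℕ) + 1 : ℕ) + 1 : ℝ) / 2 * (1 + p)
      have hgoal : (((k : ℕ) + 1 : ℕ) + 1 : ℝ) / 2 * (1 + p) = (C + 1 / 2) * (1 + p) := by
        push_cast
        ring
      rw [hgoal]
      refine max_le ?_ ?_
      · nlinarith
      · have hB : profit0 p + Real.sqrt p * ∫ x, opt0 μ k x ∂μ ≤
            (1 + p) / 2 + Real.sqrt p * (C * 2) := by
          have := profit0_le (p := p)
          have h2 : Real.sqrt p * (∫ x, opt0 μ k x ∂μ) ≤ Real.sqrt p * (C * 2) :=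
            mul_le_mul_of_nonneg_left hI1le hsq0
          linarith
        nlinarith
lemma integral_strict_mono' (μ : Measure ℝ) [IsProbabilityMeasure μ]
    {f g : ℝ → ℝ} (hf : Integrable f μ) (hg : Integrable g μ)
    (h : ∀ᵐ x ∂μ, f x < g x) :
    (∫ x, f x ∂μ) < ∫ x, g x ∂μ := by
  have hsub : Integrable (fun x => g x - f x) μ := hg.sub hf
  have hnonneg : 0 ≤ᵐ[μ] fun x => g x - f x := by
    filter_upwards [h] with x hx
    simp [le_of_lt hx, sub_nonneg]
  have hne : μ ≠ 0 := IsProbabilityMeasure.ne_zero μ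
  have hNeBot : (ae μ).NeBot := ae_neBot.mpr hne
  have hpos : 0 < μ (Function.support fun x => g x - f x) := by
    by_contra hc
    push_neg at hc
    have h0 : μ (Function.support fun x => g x - f x) = 0 := le_antisymm hc zero_le
    have hz : ∀ᵐ x ∂μ, g x - f x = 0 := by
      rw [ae_iff]
      simpa [Function.support, sub_eq_zero] using h0
    obtain ⟨x, hx1, hx2⟩ := (h.and hz).exists
    linarith
  have := (integral_pos_iff_support_of_nonneg_ae hnonneg hsub).mpr hpos
  have heq : (∫ x, g x - f x ∂μ) = (∫ x, g x ∂μ) - ∫ x, f x ∂μ :=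
    integral_sub hg hf
  linarith [heq ▸ this]

/-- If `0 < m < 1`, the optimal expected profit of the time-advantaged
arbitrageur is strictly increasing in the time horizon. -/
theorem opt_strict_mono_in_horizon (μ : Measure ℝ) [IsProbabilityMeasure μ]
    (hμ : μ (Set.Ioi (0 : ℝ)) = 1)
    (hid : Integrable (fun x : ℝ => x) μ)
    (hsqrt : Integrable (fun x : ℝ => Real.sqrt x) μ)
    (hmean : ∫ x, x ∂μ = 1)
    (m : ℝ) (hm : m = ∫ x, Real.sqrt x ∂μ)
    (hm0 : 0 < m) (hm1 : m < 1) :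
    ∀ p : ℝ, 0 < p → ∀ k : ℕ, opt0 μ k p < opt0 μ (k + 1) p := by
  have hae := ae_pos μ hμ
  have hbound := opt0_bound μ hμ hid hmean
  have hInt : ∀ k : ℕ, ∀ q : ℝ, 0 < q →
      Integrable (fun x => opt0 μ k (q * x)) μ := fun k =>
    opt0_integrable_aux μ hμ hid k _ (hbound k)
  have hInt1 : ∀ k : ℕ, Integrable (fun x => opt0 μ k x) μ := by
    intro k; simpa using hInt k 1 one_pos
  intro p hp k
  induction k generalizing p with
  | zero =>
    have hprofint : (∫ x, profit0 x ∂μ) = 1 - m := by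
      unfold profit0
      have hint3 : Integrable (fun x : ℝ => x / 2) μ := hid.div_const 2
      have hint2 : Integrable (fun x : ℝ => x / 2 - Real.sqrt x) μ := hint3.sub hsqrt
      rw [hm, integral_add hint2 (integrable_const _),
        integral_sub hint3 hsqrt, integral_div, hmean, integral_const]
      simp
      ring
    have hsqp : 0 < Real.sqrt p := Real.sqrt_pos.mpr hp
    have : opt0 μ 0 p < profit0 p + Real.sqrt p * ∫ x, opt0 μ 0 x ∂μ := by
      show profit0 p < profit0 p + Real.sqrt p * ∫ x, profit0 x ∂μ
      rw [hprofint]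
      nlinarith
    calc opt0 μ 0 p < profit0 p + Real.sqrt p * ∫ x, opt0 μ 0 x ∂μ := this
      _ ≤ opt0 μ (0 + 1) p := le_max_right _ _
  | succ k ih =>
    have hA : (∫ x, opt0 μ k (p * x) ∂μ) < ∫ x, opt0 μ (k + 1) (p * x) ∂μ := by
      refine integral_strict_mono' μ (hInt k p hp) (hInt (k + 1) p hp) ?_
      filter_upwards [hae] with x hx
      exact ih (p * x) (mul_pos hp hx)
    have hB : (∫ x, opt0 μ k x ∂μ) < ∫ x, opt0 μ (k + 1) x ∂μ := by
      refine integral_strict_mono' μ (hInt1 k) (hInt1 (k + 1)) ?_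
      filter_upwards [hae] with x hx
      exact ih x hx
    have hsqp : 0 < Real.sqrt p := Real.sqrt_pos.mpr hp
    have hB' : profit0 p + Real.sqrt p * ∫ x, opt0 μ k x ∂μ <
        profit0 p + Real.sqrt p * ∫ x, opt0 μ (k + 1) x ∂μ := by
      have := mul_lt_mul_of_pos_left hB hsqp
      linarith
    show max (∫ x, opt0 μ k (p * x) ∂μ)
        (profit0 p + Real.sqrt p * ∫ x, opt0 μ k x ∂μ) <
      max (∫ x, opt0 μ (k + 1) (p * x) ∂μ)
        (profit0 p + Real.sqrt p * ∫ x, opt0 μ (k + 1) x ∂μ)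
    exact max_lt_max hA hB'
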